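/- (Sufficient conditions for an overdamped eigenvalue) Assume θ = 0. Let ζ ∈ ℂ with det C(ζ,β) = 0 (equivalently ζ ∈ σ(A(β))). Then Re ζ = 0 whenever either of the following holds: (i) −Im ζ ≥ ω_max; or (ii) η is invertible and |ζ| < ω_min, where ω_min = √(min σ(α⁻¹η)). -/

import Mathlib

open Matrix
open scoped ComplexOrder

noncomputable section

/-- The positive semidefinite square root of a positive semidefinite matrix
(restored with its Mathlib (Dec 2024) definition, since removed from Mathlib). -/
def Matrix.PosSemidef.sqrt {n 𝕜 : Type*} [Fintype n] [RCLike 𝕜] [DecidableEq n]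
    {A : Matrix n n 𝕜} (hA : A.PosSemidef) : Matrix n n 𝕜 :=
  hA.1.eigenvectorUnitary.1 * diagonal ((↑) ∘ (√·) ∘ hA.1.eigenvalues) *
  (star hA.1.eigenvectorUnitary : Matrix n n 𝕜)

variable {N : ℕ}

/-- A real matrix viewed as a complex matrix. -/
def cm (M : Matrix (Fin N) (Fin N) ℝ) : Matrix (Fin N) (Fin N) ℂ :=
  M.map Complex.ofReal

/-- The quadratic matrix pencil `C(ζ,β) = ζ²α + iζ(2θ + βR) − η`. -/
def pencil (α η θ R : Matrix (Fin N) (Fin N) ℝ) (β : ℝ) (ζ : ℂ) :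
    Matrix (Fin N) (Fin N) ℂ :=
  ζ ^ 2 • cm α + (Complex.I * ζ) • ((2 : ℂ) • cm θ + (β : ℂ) • cm R) - cm η

/-- `K_p = (√α)⁻¹`. -/
def Kp {α : Matrix (Fin N) (Fin N) ℝ} (hα : (cm α).PosDef) : Matrix (Fin N) (Fin N) ℂ :=
  (hα.posSemidef.sqrt)⁻¹

/-- `Φ = √η · K_p`. -/
def Phi {α η : Matrix (Fin N) (Fin N) ℝ} (hα : (cm α).PosDef) (hη : (cm η).PosSemidef) :
    Matrix (Fin N) (Fin N) ℂ :=
  hη.sqrt * Kp hα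

/-- `R̃ = K_p R K_p`. -/
def Rt (R : Matrix (Fin N) (Fin N) ℝ) {α : Matrix (Fin N) (Fin N) ℝ} (hα : (cm α).PosDef) :
    Matrix (Fin N) (Fin N) ℂ :=
  Kp hα * cm R * Kp hα

/-- `Ω_p = −2i K_p θ K_p`. -/
def Omp (θ : Matrix (Fin N) (Fin N) ℝ) {α : Matrix (Fin N) (Fin N) ℝ} (hα : (cm α).PosDef) :
    Matrix (Fin N) (Fin N) ℂ :=
  ((-2 : ℂ) * Complex.I) • (Kp hα * cm θ * Kp hα)

/-- `Ω = [[Ω_p, −iΦᵀ],[iΦ, 0]]`. -/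
def Om (θ : Matrix (Fin N) (Fin N) ℝ) {α η : Matrix (Fin N) (Fin N) ℝ}
    (hα : (cm α).PosDef) (hη : (cm η).PosSemidef) :
    Matrix (Fin N ⊕ Fin N) (Fin N ⊕ Fin N) ℂ :=
  fromBlocks (Omp θ hα) ((-Complex.I) • (Phi hα hη)ᵀ) (Complex.I • Phi hα hη) 0

/-- `B = [[R̃, 0],[0, 0]]`. -/
def Bm (R : Matrix (Fin N) (Fin N) ℝ) {α : Matrix (Fin N) (Fin N) ℝ} (hα : (cm α).PosDef) :
    Matrix (Fin N ⊕ Fin N) (Fin N ⊕ Fin N) ℂ :=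
  fromBlocks (Rt R hα) 0 0 0

/-- The system operator `A(β) = Ω − iβB`. -/
def Asys (θ R : Matrix (Fin N) (Fin N) ℝ) {α η : Matrix (Fin N) (Fin N) ℝ}
    (hα : (cm α).PosDef) (hη : (cm η).PosSemidef) (β : ℝ) :
    Matrix (Fin N ⊕ Fin N) (Fin N ⊕ Fin N) ℂ :=
  Om θ hα hη - (Complex.I * (β : ℂ)) • Bm R hα

/-- The ℓ²→ℓ² operator norm of a complex matrix. -/
def opN {n : Type*} [Fintype n] [DecidableEq n] (M : Matrix n n ℂ) : ℝ :=
  ‖Matrix.toEuclideanCLM (𝕜 := ℂ) M‖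

/-- `ω_max = ‖Ω‖`. -/
def omegaMax (θ : Matrix (Fin N) (Fin N) ℝ) {α η : Matrix (Fin N) (Fin N) ℝ}
    (hα : (cm α).PosDef) (hη : (cm η).PosSemidef) : ℝ :=
  opN (Om θ hα hη)

/-- `b_min`, the smallest nonzero eigenvalue of `B`. -/
def bMin (R : Matrix (Fin N) (Fin N) ℝ) {α : Matrix (Fin N) (Fin N) ℝ} (hα : (cm α).PosDef) : ℝ :=
  sInf {r : ℝ | r ≠ 0 ∧ (r : ℂ) ∈ spectrum ℂ (Bm R hα)}


/-! If `C(ζ,β) v = 0` with `v ≠ 0`, the Hermitian forms `a = v*αv > 0`, `b = v*(βR)v`,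
`e = v*ηv` are real and `ζ²a + iζb − e = 0`. The imaginary part reads `Re ζ · (2 Im ζ · a + b) = 0`,
so if `Re ζ ≠ 0` the real part collapses to `|ζ|² a = e`. Any Loewner bounds `c₁ α ≤ η ≤ c₂ α`
therefore squeeze `c₁ ≤ |ζ|² ≤ c₂`. Since `η = √α Φᴴ Φ √α` we get `η ≤ ‖Φ‖² α ≤ ω_max² α`, which
under (i) forces `(Re ζ)² ≤ 0`; since `α⁻¹η` is similar to the Hermitian matrix `K_p η K_p`, any
`λ` below its real spectrum gives `λ α ≤ η`, contradicting `|ζ|² < ω_min²` in case (ii). -/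

namespace Matrix.PosSemidef

variable {n 𝕜 : Type*} [Fintype n] [RCLike 𝕜] [DecidableEq n] {A : Matrix n n 𝕜}

lemma sqrt_eq_cfc (hA : A.PosSemidef) : hA.sqrt = cfc Real.sqrt A := by
  rw [hA.1.cfc_eq]
  rfl

lemma isHermitian_sqrt (hA : A.PosSemidef) : hA.sqrt.IsHermitian := by
  rw [sqrt_eq_cfc]
  exact cfc_predicate _ _

lemma sqrt_mul_sqrt (hA : A.PosSemidef) : hA.sqrt * hA.sqrt = A := by
  have hsa : IsSelfAdjoint A := hA.isHermitian
  rw [sqrt_eq_cfc, ← cfc_mul ..]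
  conv_rhs => rw [← cfc_id' ℝ A]
  open scoped MatrixOrder in
  exact cfc_congr fun x hx => Real.mul_self_sqrt (spectrum_nonneg_of_nonneg hA.nonneg hx)

end Matrix.PosSemidef

lemma Matrix.PosDef.isUnit_sqrt {n 𝕜 : Type*} [Fintype n] [RCLike 𝕜] [DecidableEq n]
    {A : Matrix n n 𝕜} (hA : A.PosDef) : IsUnit hA.posSemidef.sqrt :=
  isUnit_of_mul_isUnit_left (hA.posSemidef.sqrt_mul_sqrt ▸ hA.isUnit)

section QuadraticForm

variable {n : Type*} [Fintype n]

lemma star_dotProduct_self_eq_norm_sq (u : n → ℂ) :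
    star u ⬝ᵥ u = ((‖WithLp.toLp 2 u‖ ^ 2 : ℝ) : ℂ) := by
  rw [dotProduct_comm, ← EuclideanSpace.inner_toLp_toLp, inner_self_eq_norm_sq_to_K]
  push_cast
  rfl

lemma norm_toLp_sum_elim_sq {m : Type*} [Fintype m] (u : n → ℂ) (w : m → ℂ) :
    ‖WithLp.toLp 2 (Sum.elim u w)‖ ^ 2 =
      ‖WithLp.toLp 2 u‖ ^ 2 + ‖WithLp.toLp 2 w‖ ^ 2 := by
  simp only [EuclideanSpace.norm_sq_eq, Fintype.sum_sum_type, Sum.elim_inl, Sum.elim_inr]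

lemma Matrix.IsHermitian.coe_re_star_dotProduct_mulVec {M : Matrix n n ℂ} (hM : M.IsHermitian)
    (v : n → ℂ) : ((star v ⬝ᵥ (M *ᵥ v)).re : ℂ) = star v ⬝ᵥ (M *ᵥ v) :=
  Complex.ext rfl (by simpa using (hM.im_star_dotProduct_mulVec_self v).symm)

lemma Matrix.PosSemidef.re_star_dotProduct_mulVec_le {H K : Matrix n n ℂ}
    (h : (H - K).PosSemidef) (v : n → ℂ) :
    (star v ⬝ᵥ (K *ᵥ v)).re ≤ (star v ⬝ᵥ (H *ᵥ v)).re := by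
  have := (Complex.le_def.mp (h.dotProduct_mulVec_nonneg v)).1
  rw [sub_mulVec, dotProduct_sub, Complex.sub_re, Complex.zero_re] at this
  linarith

end QuadraticForm

section OperatorNorm

variable {n : Type*} [Fintype n] [DecidableEq n]

lemma norm_mulVec_le_opN (M : Matrix n n ℂ) (u : n → ℂ) :
    ‖WithLp.toLp 2 (M *ᵥ u)‖ ≤ opN M * ‖WithLp.toLp 2 u‖ :=
  (toEuclideanCLM (𝕜 := ℂ) M).le_opNorm (WithLp.toLp 2 u)

lemma opN_smul (c : ℂ) (M : Matrix n n ℂ) : opN (c • M) = ‖c‖ * opN M := by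
  rw [opN, map_smul, norm_smul, opN]

lemma opN_le_opN_fromBlocks₂₁ (A B C D : Matrix n n ℂ) :
    opN C ≤ opN (fromBlocks A B C D) := by
  refine (toEuclideanCLM (𝕜 := ℂ) C).opNorm_le_bound (norm_nonneg _) fun x => ?_
  have hx : fromBlocks A B C D *ᵥ Sum.elim x.ofLp 0 =
      Sum.elim (A *ᵥ x.ofLp) (C *ᵥ x.ofLp) := by
    simp [fromBlocks_mulVec]
  have h := norm_mulVec_le_opN (fromBlocks A B C D) (Sum.elim x.ofLp 0)
  rw [hx] at h
  refine le_of_pow_le_pow_left₀ two_ne_zero (mul_nonneg (norm_nonneg _) (norm_nonneg _)) ?_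
  calc ‖toEuclideanCLM (𝕜 := ℂ) C x‖ ^ 2
        ≤ ‖WithLp.toLp 2 (Sum.elim (A *ᵥ x.ofLp) (C *ᵥ x.ofLp))‖ ^ 2 := by
        rw [norm_toLp_sum_elim_sq]
        exact le_add_of_nonneg_left (sq_nonneg _)
    _ ≤ (opN (fromBlocks A B C D) * ‖WithLp.toLp 2 (Sum.elim x.ofLp 0)‖) ^ 2 := by gcongr
    _ = (opN (fromBlocks A B C D) * ‖x‖) ^ 2 := by
        rw [mul_pow, mul_pow, norm_toLp_sum_elim_sq]
        simp

lemma posSemidef_sq_smul_one_sub_conjTranspose_mul_self {M : Matrix n n ℂ} {c : ℝ}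
    (hc : opN M ≤ c) : (c ^ 2 • (1 : Matrix n n ℂ) - Mᴴ * M).PosSemidef := by
  refine .of_dotProduct_mulVec_nonneg ((isHermitian_one.smul (.all _)).sub
    (isHermitian_conjTranspose_mul_self M)) fun u => ?_
  have hMu : ‖WithLp.toLp 2 (M *ᵥ u)‖ ≤ c * ‖WithLp.toLp 2 u‖ :=
    (norm_mulVec_le_opN M u).trans (by gcongr)
  rw [sub_mulVec, dotProduct_sub, smul_mulVec, one_mulVec, ← mulVec_mulVec, dotProduct_mulVec,
    ← star_mulVec, dotProduct_smul, star_dotProduct_self_eq_norm_sq,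
    star_dotProduct_self_eq_norm_sq, Complex.real_smul, ← Complex.ofReal_mul,
    ← Complex.ofReal_sub, Complex.zero_le_real, sub_nonneg, ← mul_pow]
  gcongr

end OperatorNorm

section Loewner

variable {n : Type*} [Fintype n] [DecidableEq n]

lemma posSemidef_sq_smul_sub_of_opN_le {A H : Matrix n n ℂ} (hA : A.PosDef) (hH : H.PosSemidef)
    {c : ℝ} (hc : opN (hH.sqrt * hA.posSemidef.sqrt⁻¹) ≤ c) :
    (c ^ 2 • A - H).PosSemidef := by
  set S := hA.posSemidef.sqrt
  set Φ := hH.sqrt * S⁻¹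
  have hΦS : Φ * S = hH.sqrt := by
    rw [Matrix.mul_assoc, nonsing_inv_mul _ ((isUnit_iff_isUnit_det S).mp hA.isUnit_sqrt),
      Matrix.mul_one]
  have hA' : A = Sᴴ * S := by rw [hA.posSemidef.isHermitian_sqrt.eq, hA.posSemidef.sqrt_mul_sqrt]
  have hH' : H = (Φ * S)ᴴ * (Φ * S) := by rw [hΦS, hH.isHermitian_sqrt.eq, hH.sqrt_mul_sqrt]
  have hdiff : c ^ 2 • A - H = Sᴴ * (c ^ 2 • (1 : Matrix n n ℂ) - Φᴴ * Φ) * S := by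
    rw [hH', hA']
    simp only [conjTranspose_mul, Matrix.mul_sub, Matrix.sub_mul, Matrix.mul_smul,
      Matrix.smul_mul, Matrix.mul_one, Matrix.mul_assoc]
  rw [hdiff]
  exact (posSemidef_sq_smul_one_sub_conjTranspose_mul_self hc).conjTranspose_mul_mul_same S

lemma Matrix.sInf_setOf_ofReal_mem_spectrum_le (M : Matrix n n ℂ) {x : ℝ}
    (hx : x ∈ spectrum ℝ M) : sInf {r : ℝ | (r : ℂ) ∈ spectrum ℂ M} ≤ x := by
  have hS : {r : ℝ | (r : ℂ) ∈ spectrum ℂ M} = spectrum ℝ M :=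
    spectrum.preimage_algebraMap ℂ
  rw [hS]
  exact csInf_le M.finite_real_spectrum.bddBelow hx

lemma posSemidef_sub_smul_of_le_spectrum {A H : Matrix n n ℂ} (hA : A.PosDef)
    (hH : H.IsHermitian) {r : ℝ} (hr : ∀ x ∈ spectrum ℝ (A⁻¹ * H), r ≤ x) :
    (H - r • A).PosSemidef := by
  set S := hA.posSemidef.sqrt
  obtain ⟨u, hu⟩ : IsUnit S := hA.isUnit_sqrt
  have hSH : Sᴴ = S := hA.posSemidef.isHermitian_sqrt
  have hSS : S * S = A := hA.posSemidef.sqrt_mul_sqrt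
  clear_value S
  have hSdet : IsUnit S.det := (isUnit_iff_isUnit_det S).mp ⟨u, hu⟩
  set T := S⁻¹ * H * S⁻¹
  have hT : T.IsHermitian := by
    simpa only [conjTranspose_nonsing_inv, hSH] using isHermitian_conjTranspose_mul_mul S⁻¹ hH
  have hspec : spectrum ℝ T = spectrum ℝ (A⁻¹ * H) := by
    have hconj :
        (u : Matrix n n ℂ) * (A⁻¹ * H) * ((u⁻¹ : (Matrix n n ℂ)ˣ) : Matrix n n ℂ) = T := by
      rw [coe_units_inv, hu, ← hSS, Matrix.mul_inv_rev]
      simp only [← Matrix.mul_assoc, mul_nonsing_inv _ hSdet, Matrix.one_mul, T]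
    rw [← hconj, spectrum.units_conjugate]
  have hTr : (T - r • (1 : Matrix n n ℂ)).PosSemidef := by
    open scoped MatrixOrder in
    have := (algebraMap_le_iff_le_spectrum (a := T) hT).mpr (hspec ▸ hr)
    rwa [Matrix.le_iff, Algebra.algebraMap_eq_smul_one] at this
  have hdiff : H - r • A = Sᴴ * (T - r • (1 : Matrix n n ℂ)) * S := by
    rw [hSH, ← hSS]
    simp only [T, Matrix.mul_sub, Matrix.sub_mul, Matrix.mul_smul, Matrix.smul_mul,
      Matrix.mul_one, ← Matrix.mul_assoc, mul_nonsing_inv _ hSdet, Matrix.one_mul]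
    simp only [Matrix.mul_assoc, nonsing_inv_mul _ hSdet, Matrix.mul_one]
  rw [hdiff]
  exact hTr.conjTranspose_mul_mul_same S

end Loewner

lemma Complex.re_eq_zero_or_normSq_mul_eq {ζ : ℂ} {a b e : ℝ}
    (h : ζ ^ 2 * a + Complex.I * ζ * b - e = 0) : ζ.re = 0 ∨ Complex.normSq ζ * a = e := by
  have him := congrArg Complex.im h
  have hre := congrArg Complex.re h
  simp only [Complex.sub_re, Complex.add_re, Complex.mul_re, Complex.sub_im, Complex.add_im,
    Complex.mul_im, Complex.I_re, Complex.I_im, Complex.ofReal_re, Complex.ofReal_im, pow_two,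
    Complex.zero_re, Complex.zero_im] at him hre
  have hfac : ζ.re * (2 * ζ.im * a + b) = 0 := by linear_combination him
  refine (mul_eq_zero.mp hfac).imp id fun hb => ?_
  rw [Complex.normSq_apply]
  linear_combination hre + ζ.im * hb

section Pencil

variable {n : Type*} [Fintype n] [DecidableEq n] {A B E : Matrix n n ℂ} {ζ : ℂ}

lemma re_eq_zero_or_exists_of_det_eq_zero (hA : A.PosDef) (hB : B.IsHermitian)
    (hE : E.IsHermitian) (h : (ζ ^ 2 • A + (Complex.I * ζ) • B - E).det = 0) :
    ζ.re = 0 ∨ ∃ v : n → ℂ, 0 < (star v ⬝ᵥ (A *ᵥ v)).re ∧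
      Complex.normSq ζ * (star v ⬝ᵥ (A *ᵥ v)).re = (star v ⬝ᵥ (E *ᵥ v)).re := by
  obtain ⟨v, hv, hCv⟩ := exists_mulVec_eq_zero_iff.mpr h
  have hform : star v ⬝ᵥ ((ζ ^ 2 • A + (Complex.I * ζ) • B - E) *ᵥ v) = 0 := by
    rw [hCv, dotProduct_zero]
  simp only [sub_mulVec, add_mulVec, smul_mulVec, dotProduct_sub, dotProduct_add,
    dotProduct_smul, smul_eq_mul] at hform
  rw [← hA.isHermitian.coe_re_star_dotProduct_mulVec, ← hB.coe_re_star_dotProduct_mulVec,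
    ← hE.coe_re_star_dotProduct_mulVec] at hform
  refine (Complex.re_eq_zero_or_normSq_mul_eq hform).imp_right fun hζ => ⟨v, ?_, hζ⟩
  simpa using (Complex.lt_def.mp (hA.dotProduct_mulVec_pos hv)).1

lemma re_eq_zero_or_normSq_le_of_det_eq_zero (hA : A.PosDef) (hB : B.IsHermitian)
    (hE : E.IsHermitian) (h : (ζ ^ 2 • A + (Complex.I * ζ) • B - E).det = 0) {c : ℝ}
    (hc : (c • A - E).PosSemidef) : ζ.re = 0 ∨ Complex.normSq ζ ≤ c := by
  refine (re_eq_zero_or_exists_of_det_eq_zero hA hB hE h).imp_right fun ⟨v, hv, hζ⟩ => ?_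
  have := hc.re_star_dotProduct_mulVec_le v
  rw [smul_mulVec, dotProduct_smul, Complex.real_smul, Complex.re_ofReal_mul, ← hζ] at this
  exact le_of_mul_le_mul_right this hv

lemma re_eq_zero_or_le_normSq_of_det_eq_zero (hA : A.PosDef) (hB : B.IsHermitian)
    (hE : E.IsHermitian) (h : (ζ ^ 2 • A + (Complex.I * ζ) • B - E).det = 0) {c : ℝ}
    (hc : (E - c • A).PosSemidef) : ζ.re = 0 ∨ c ≤ Complex.normSq ζ := by
  refine (re_eq_zero_or_exists_of_det_eq_zero hA hB hE h).imp_right fun ⟨v, hv, hζ⟩ => ?_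
  have := hc.re_star_dotProduct_mulVec_le v
  rw [smul_mulVec, dotProduct_smul, Complex.real_smul, Complex.re_ofReal_mul, ← hζ] at this
  exact le_of_mul_le_mul_right this hv

end Pencil

lemma opN_Phi_le_omegaMax {α η : Matrix (Fin N) (Fin N) ℝ} (hα : (cm α).PosDef)
    (hη : (cm η).PosSemidef) : opN (Phi hα hη) ≤ omegaMax 0 hα hη := by
  calc opN (Phi hα hη) = opN (Complex.I • Phi hα hη) := by
        rw [opN_smul, Complex.norm_I, one_mul]
    _ ≤ omegaMax 0 hα hη := opN_le_opN_fromBlocks₂₁ _ _ _ _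

lemma isHermitian_damping {R : Matrix (Fin N) (Fin N) ℝ} (hR : (cm R).IsHermitian) (β : ℝ) :
    ((2 : ℂ) • cm 0 + (β : ℂ) • cm R).IsHermitian := by
  have hcm0 : cm (0 : Matrix (Fin N) (Fin N) ℝ) = 0 := Matrix.map_zero _ Complex.ofReal_zero
  rw [hcm0, smul_zero, zero_add, Complex.coe_smul]
  exact hR.smul (.all β)

theorem overdamped_sufficient_conditions_general
    {N : ℕ}
    (α η R : Matrix (Fin N) (Fin N) ℝ)
    (hα : (cm α).PosDef) (hη : (cm η).PosSemidef)
    (hR : (cm R).PosSemidef)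
    (β : ℝ)
    (ζ : ℂ) (hdet : (pencil α η 0 R β ζ).det = 0) :
    (omegaMax 0 hα hη ≤ -ζ.im → ζ.re = 0) ∧
    (IsUnit (cm η) →
      ‖ζ‖ < Real.sqrt (sInf {r : ℝ | (r : ℂ) ∈ spectrum ℂ ((cm α)⁻¹ * cm η)}) →
      ζ.re = 0) := by
  have hB := isHermitian_damping hR.isHermitian β
  refine ⟨fun hω => ?_, fun _ hζ => ?_⟩
  · have hle := posSemidef_sq_smul_sub_of_opN_le hα hη (opN_Phi_le_omegaMax hα hη)
    refine (re_eq_zero_or_normSq_le_of_det_eq_zero hα hB hη.1 hdet hle).elim id fun h => ?_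
    have hω0 : 0 ≤ omegaMax 0 hα hη := norm_nonneg _
    have hre : ζ.re * ζ.re ≤ 0 := by rw [Complex.normSq_apply] at h; nlinarith
    exact mul_self_eq_zero.mp (hre.antisymm (mul_self_nonneg _))
  · have hle := posSemidef_sub_smul_of_le_spectrum hα hη.1
      fun _ => Matrix.sInf_setOf_ofReal_mem_spectrum_le _
    refine (re_eq_zero_or_le_normSq_of_det_eq_zero hα hB hη.1 hdet hle).resolve_right fun h => ?_
    rw [Real.lt_sqrt (norm_nonneg _), Complex.sq_norm] at hζ
    exact h.not_gt hζ

/-- **Sufficient conditions for an overdamped eigenvalue** (`θ = 0`). If `det C(ζ,β) = 0`,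
then `Re ζ = 0` whenever (i) `−Im ζ ≥ ω_max`, or (ii) `η` is invertible and
`|ζ| < ω_min = √(min σ(α⁻¹η))`. -/
theorem overdamped_sufficient_conditions
    {N : ℕ} (hN : 1 ≤ N)
    (α η R : Matrix (Fin N) (Fin N) ℝ)
    (hα : (cm α).PosDef) (hη : (cm η).PosSemidef)
    (hR : (cm R).PosSemidef) (hR0 : R ≠ 0)
    (β : ℝ) (hβ : 0 ≤ β)
    (ζ : ℂ) (hdet : (pencil α η 0 R β ζ).det = 0) :
    (omegaMax 0 hα hη ≤ -ζ.im → ζ.re = 0) ∧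
    (IsUnit (cm η) →
      ‖ζ‖ < Real.sqrt (sInf {r : ℝ | (r : ℂ) ∈ spectrum ℂ ((cm α)⁻¹ * cm η)}) →
      ζ.re = 0) :=
  overdamped_sufficient_conditions_general α η R hα hη hR β ζ hdet
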